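/- For every n×n complex matrix A, the j-th largest eigenvalue of Re A is at most the j-th largest singular value of A: λ_j(Re A) ≤ s_j(A) for j = 1, …, n (Fan–Hoffman inequality). -/

import Mathlib

/-!
Courant–Fischer dimension count. The eigenvectors of `Re A` whose eigenvalues are at least
`λ_j(Re A)` span a space of dimension at least `j + 1`; the eigenvectors of `Aᴴ A` whose
eigenvalues are at most `s_j(A)²` span a space of dimension at least `n - j`. These two
subspaces share a unit vector `x`, and for it
`λ_j(Re A) ≤ Re ⟪x, (Re A) x⟫ = Re ⟪x, A x⟫ ≤ ‖A x‖ ≤ s_j(A)`.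
-/

open Matrix
open scoped ComplexOrder

noncomputable section
namespace Paper

variable {n : ℕ}

/-- Real part `(A + Aᴴ)/2`. -/
def re (A : Matrix (Fin n) (Fin n) ℂ) : Matrix (Fin n) (Fin n) ℂ := (2⁻¹ : ℂ) • (A + Aᴴ)

/-- Imaginary part `(A - Aᴴ)/(2i)`. -/
def im (A : Matrix (Fin n) (Fin n) ℂ) : Matrix (Fin n) (Fin n) ℂ :=
  (2 * Complex.I)⁻¹ • (A - Aᴴ)

/-- The sector `S_α`. -/
def sector (α : ℝ) : Set ℂ := {z | 0 < z.re ∧ |z.im| ≤ z.re * Real.tan α}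

/-- Numerical range of a matrix. -/
def numericalRange (A : Matrix (Fin n) (Fin n) ℂ) : Set ℂ :=
  {z | ∃ x : Fin n → ℂ, star x ⬝ᵥ x = 1 ∧ z = star x ⬝ᵥ (A *ᵥ x)}

/-- Loewner order: `X ≤ Y` iff `Y - X` is positive semidefinite. -/
def loewnerLE (X Y : Matrix (Fin n) (Fin n) ℂ) : Prop := (Y - X).PosSemidef

lemma re_isHermitian (A : Matrix (Fin n) (Fin n) ℂ) : (re A).IsHermitian := by
  show ((2⁻¹ : ℂ) • (A + Aᴴ))ᴴ = (2⁻¹ : ℂ) • (A + Aᴴ)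
  rw [Matrix.conjTranspose_smul, Matrix.conjTranspose_add,
    Matrix.conjTranspose_conjTranspose, add_comm Aᴴ A]
  simp

/-- The `j`-th largest element of `v` (descending sort). -/
def nthLargest (v : Fin n → ℝ) (j : Fin n) : ℝ :=
  ((List.ofFn v).mergeSort (fun a b => decide (b ≤ a))).get
    (Fin.cast (by simp) j)

/-- `j`-th largest eigenvalue of a Hermitian matrix. -/
def eigDesc {A : Matrix (Fin n) (Fin n) ℂ} (hA : A.IsHermitian) (j : Fin n) : ℝ :=
  nthLargest hA.eigenvalues j

/-- `j`-th largest singular value. -/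
def singular (A : Matrix (Fin n) (Fin n) ℂ) (j : Fin n) : ℝ :=
  nthLargest (fun i => Real.sqrt ((Matrix.isHermitian_conjTranspose_mul_self A).eigenvalues i)) j

/-- `Matrix.PosSemidef.sqrt` as defined in the older Mathlib (removed since). -/
def psdSqrt {A : Matrix (Fin n) (Fin n) ℂ} (hA : A.PosSemidef) : Matrix (Fin n) (Fin n) ℂ :=
  hA.1.eigenvectorUnitary.1 * diagonal ((↑) ∘ (Real.sqrt ∘ hA.1.eigenvalues)) *
    (star hA.1.eigenvectorUnitary : Matrix (Fin n) (Fin n) ℂ)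

/-- Weighted geometric mean of positive definite matrices. -/
def sharp (v : ℝ) {A B : Matrix (Fin n) (Fin n) ℂ} (hA : A.PosDef) (hB : B.PosDef) :
    Matrix (Fin n) (Fin n) ℂ :=
  psdSqrt hA.posSemidef *
    (Matrix.isHermitian_mul_mul_conjTranspose (psdSqrt hA.posSemidef)⁻¹ hB.1).cfc
      (fun x => Real.rpow x v) * psdSqrt hA.posSemidef

/-- Weighted arithmetic mean. -/
def arith (v : ℝ) (A B : Matrix (Fin n) (Fin n) ℂ) : Matrix (Fin n) (Fin n) ℂ :=
  (1 - v) • A + v • B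

/-- Weighted harmonic mean. -/
def harm (v : ℝ) (A B : Matrix (Fin n) (Fin n) ℂ) : Matrix (Fin n) (Fin n) ℂ :=
  ((1 - v) • A⁻¹ + v • B⁻¹)⁻¹

/-- Kantorovich constant. -/
def K (h : ℝ) : ℝ := (h + 1) ^ 2 / (4 * h)

open Finset Module
open scoped InnerProductSpace

section Sorting

variable {α : Type*} [LinearOrder α]

lemma _root_.List.Pairwise.succ_le_countP_le_getElem {L : List α} (hL : L.Pairwise (· ≥ ·))
    {j : ℕ} (hj : j < L.length) : j + 1 ≤ L.countP (fun a => L[j] ≤ a) := by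
  have hhead : ∀ a ∈ L.take (j + 1), L[j] ≤ a := by
    intro a ha
    obtain ⟨k, hk, rfl⟩ := List.mem_take_iff_getElem.mp ha
    exact hL.rel_get_of_le (a := ⟨k, by omega⟩) (b := ⟨j, hj⟩) (Fin.mk_le_mk.mpr (by omega))
  refine le_trans (le_of_eq ?_) (L.take_sublist (j + 1)).countP_le
  rw [List.countP_eq_length.mpr (by simpa using hhead), List.length_take]
  omega

lemma _root_.List.Pairwise.length_sub_le_countP_le_getElem {L : List α}
    (hL : L.Pairwise (· ≥ ·)) {j : ℕ} (hj : j < L.length) :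
    L.length - j ≤ L.countP (fun a => a ≤ L[j]) := by
  have htail : ∀ a ∈ L.drop j, a ≤ L[j] := by
    intro a ha
    obtain ⟨k, hk, rfl⟩ := List.mem_drop_iff_getElem.mp ha
    exact hL.rel_get_of_le (a := ⟨j, hj⟩) (b := ⟨j + k, by omega⟩)
      (Fin.mk_le_mk.mpr (Nat.le_add_right j k))
  refine le_trans (le_of_eq ?_) (L.drop_sublist j).countP_le
  rw [List.countP_eq_length.mpr (by simpa using htail), List.length_drop]

end Sorting

lemma card_filter_eq_countP_ofFn {β : Type*} (v : Fin n → β) (p : β → Prop) [DecidablePred p] :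
    #{i | p (v i)} = (List.ofFn v).countP (fun a => p a) := by
  rw [List.ofFn_eq_map, List.countP_eq_length_filter, List.filter_map, List.length_map]
  rfl

lemma pairwise_mergeSort_ofFn (v : Fin n → ℝ) :
    ((List.ofFn v).mergeSort (fun a b => decide (b ≤ a))).Pairwise (· ≥ ·) := by
  simpa using List.pairwise_mergeSort (le := fun a b : ℝ => decide (b ≤ a))
    (fun a b c hab hbc => by simp only [decide_eq_true_iff] at *; exact hbc.trans hab)
    (fun a b => by simpa using le_total b a) (List.ofFn v)

lemma nthLargest_mem_range (v : Fin n → ℝ) (j : Fin n) : nthLargest v j ∈ Set.range v :=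
  List.mem_ofFn.mp (List.mem_mergeSort.mp (List.get_mem _ _))

lemma succ_le_card_nthLargest_le (v : Fin n → ℝ) (j : Fin n) :
    j + 1 ≤ #{i | nthLargest v j ≤ v i} := by
  rw [card_filter_eq_countP_ofFn, ← (List.mergeSort_perm _ (fun a b => decide (b ≤ a))).countP_eq]
  exact (pairwise_mergeSort_ofFn v).succ_le_countP_le_getElem (by simp)

lemma sub_le_card_le_nthLargest (v : Fin n → ℝ) (j : Fin n) :
    n - j ≤ #{i | v i ≤ nthLargest v j} := by
  rw [card_filter_eq_countP_ofFn v (· ≤ nthLargest v j),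
    ← (List.mergeSort_perm _ (fun a b => decide (b ≤ a))).countP_eq]
  have h := (pairwise_mergeSort_ofFn v).length_sub_le_countP_le_getElem (j := j) (by simp)
  simp only [List.length_mergeSort, List.length_ofFn] at h
  exact h

section Orthonormal

variable {𝕜 E ι : Type*} [RCLike 𝕜] [NormedAddCommGroup E] [InnerProductSpace 𝕜 E] [Fintype ι]
  {v : ι → E} {T : E →ₗ[𝕜] E} {μ : ι → ℝ}

lemma _root_.Orthonormal.norm_sum_smul_sq (hv : Orthonormal 𝕜 v) (c : ι → 𝕜) :
    ‖∑ i, c i • v i‖ ^ 2 = ∑ i, ‖c i‖ ^ 2 := by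
  rw [← inner_self_eq_norm_sq (𝕜 := 𝕜), hv.inner_sum, map_sum]
  refine Finset.sum_congr rfl fun i _ => ?_
  rw [RCLike.conj_mul, ← RCLike.ofReal_pow, RCLike.ofReal_re]

lemma _root_.Orthonormal.re_inner_sum_smul_map_eq (hv : Orthonormal 𝕜 v)
    (hT : ∀ i, T (v i) = (μ i : 𝕜) • v i) (c : ι → 𝕜) :
    RCLike.re ⟪∑ i, c i • v i, T (∑ i, c i • v i)⟫_𝕜 = ∑ i, μ i * ‖c i‖ ^ 2 := by
  have hTc : T (∑ i, c i • v i) = ∑ i, ((μ i : 𝕜) * c i) • v i := by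
    simp only [map_sum, map_smul, hT, smul_smul, mul_comm]
  rw [hTc, hv.inner_sum, map_sum]
  refine Finset.sum_congr rfl fun i _ => ?_
  rw [mul_left_comm, RCLike.conj_mul, ← RCLike.ofReal_pow, ← RCLike.ofReal_mul, RCLike.ofReal_re]

lemma _root_.Orthonormal.mul_norm_sq_le_re_inner_map_self (hv : Orthonormal 𝕜 v)
    (hT : ∀ i, T (v i) = (μ i : 𝕜) • v i) {a : ℝ} (ha : ∀ i, a ≤ μ i) {x : E}
    (hx : x ∈ Submodule.span 𝕜 (Set.range v)) :
    a * ‖x‖ ^ 2 ≤ RCLike.re ⟪x, T x⟫_𝕜 := by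
  obtain ⟨c, rfl⟩ := (Submodule.mem_span_range_iff_exists_fun 𝕜).mp hx
  rw [hv.norm_sum_smul_sq, hv.re_inner_sum_smul_map_eq hT, Finset.mul_sum]
  gcongr with i
  exact ha i

lemma _root_.Orthonormal.re_inner_map_self_le_mul_norm_sq (hv : Orthonormal 𝕜 v)
    (hT : ∀ i, T (v i) = (μ i : 𝕜) • v i) {a : ℝ} (ha : ∀ i, μ i ≤ a) {x : E}
    (hx : x ∈ Submodule.span 𝕜 (Set.range v)) :
    RCLike.re ⟪x, T x⟫_𝕜 ≤ a * ‖x‖ ^ 2 := by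
  obtain ⟨c, rfl⟩ := (Submodule.mem_span_range_iff_exists_fun 𝕜).mp hx
  rw [hv.norm_sum_smul_sq, hv.re_inner_sum_smul_map_eq hT, Finset.mul_sum]
  gcongr with i
  exact ha i

end Orthonormal

lemma le_of_mul_norm_sq_le_re_inner {𝕜 E : Type*} [RCLike 𝕜] [NormedAddCommGroup E]
    [InnerProductSpace 𝕜 E] {x y : E} (hx : x ≠ 0) {a b : ℝ}
    (ha : a * ‖x‖ ^ 2 ≤ RCLike.re ⟪x, y⟫_𝕜) (hb : ‖y‖ ≤ b * ‖x‖) : a ≤ b := by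
  refine le_of_mul_le_mul_right ?_ (by positivity : 0 < ‖x‖ ^ 2)
  calc a * ‖x‖ ^ 2 ≤ RCLike.re ⟪x, y⟫_𝕜 := ha
    _ ≤ ‖x‖ * ‖y‖ := re_inner_le_norm x y
    _ ≤ ‖x‖ * (b * ‖x‖) := by gcongr
    _ = b * ‖x‖ ^ 2 := by ring

lemma _root_.Submodule.exists_ne_zero_mem_of_finrank_lt_add {K V : Type*} [DivisionRing K]
    [AddCommGroup V] [Module K V] [FiniteDimensional K V] {s t : Submodule K V}
    (h : finrank K V < finrank K s + finrank K t) : ∃ x ∈ s, x ∈ t ∧ x ≠ 0 := by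
  by_contra! hst
  exact h.not_ge (Submodule.finrank_add_finrank_le_of_disjoint (Submodule.disjoint_def.mpr hst))

section Hermitian

variable {𝕜 ι : Type*} [RCLike 𝕜] [Fintype ι] [DecidableEq ι] {M : Matrix ι ι 𝕜}

lemma _root_.Matrix.IsHermitian.toEuclideanLin_eigenvectorBasis (hM : M.IsHermitian) (i : ι) :
    toEuclideanLin M (hM.eigenvectorBasis i) = (hM.eigenvalues i : 𝕜) • hM.eigenvectorBasis i := by
  rw [toLpLin_apply, hM.mulVec_eigenvectorBasis, RCLike.real_smul_eq_coe_smul (K := 𝕜)]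
  rfl

def _root_.Matrix.IsHermitian.eigenvectorSpan (hM : M.IsHermitian) (S : Finset ι) :
    Submodule 𝕜 (EuclideanSpace 𝕜 ι) :=
  Submodule.span 𝕜 (Set.range fun i : S => hM.eigenvectorBasis i)

lemma _root_.Matrix.IsHermitian.finrank_eigenvectorSpan (hM : M.IsHermitian) (S : Finset ι) :
    finrank 𝕜 (hM.eigenvectorSpan S) = #S := by
  rw [Matrix.IsHermitian.eigenvectorSpan, finrank_span_eq_card, Fintype.card_coe]
  exact hM.eigenvectorBasis.orthonormal.linearIndependent.comp _ Subtype.val_injective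

lemma _root_.Matrix.IsHermitian.mul_norm_sq_le_re_inner_of_mem_eigenvectorSpan
    (hM : M.IsHermitian) {S : Finset ι} {a : ℝ} (ha : ∀ i ∈ S, a ≤ hM.eigenvalues i)
    {x : EuclideanSpace 𝕜 ι} (hx : x ∈ hM.eigenvectorSpan S) :
    a * ‖x‖ ^ 2 ≤ RCLike.re ⟪x, toEuclideanLin M x⟫_𝕜 :=
  (hM.eigenvectorBasis.orthonormal.comp _ Subtype.val_injective).mul_norm_sq_le_re_inner_map_self
    (fun i => hM.toEuclideanLin_eigenvectorBasis i) (fun i => ha i i.2) hx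

lemma _root_.Matrix.IsHermitian.re_inner_le_mul_norm_sq_of_mem_eigenvectorSpan
    (hM : M.IsHermitian) {S : Finset ι} {a : ℝ} (ha : ∀ i ∈ S, hM.eigenvalues i ≤ a)
    {x : EuclideanSpace 𝕜 ι} (hx : x ∈ hM.eigenvectorSpan S) :
    RCLike.re ⟪x, toEuclideanLin M x⟫_𝕜 ≤ a * ‖x‖ ^ 2 :=
  (hM.eigenvectorBasis.orthonormal.comp _ Subtype.val_injective).re_inner_map_self_le_mul_norm_sq
    (fun i => hM.toEuclideanLin_eigenvectorBasis i) (fun i => ha i i.2) hx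

end Hermitian

lemma _root_.Matrix.re_inner_toEuclideanLin_conjTranspose_mul_self {𝕜 m ι : Type*} [RCLike 𝕜]
    [Fintype m] [DecidableEq m] [Fintype ι] [DecidableEq ι]
    (A : Matrix m ι 𝕜) (x : EuclideanSpace 𝕜 ι) :
    RCLike.re ⟪x, toEuclideanLin (Aᴴ * A) x⟫_𝕜 = ‖toEuclideanLin A x‖ ^ 2 := by
  rw [toLpLin_mul 2 2, toEuclideanLin_conjTranspose_eq_adjoint, LinearMap.comp_apply,
    LinearMap.adjoint_inner_right, inner_self_eq_norm_sq]

lemma re_inner_toEuclideanLin_re (A : Matrix (Fin n) (Fin n) ℂ) (x : EuclideanSpace ℂ (Fin n)) :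
    (⟪x, toEuclideanLin (re A) x⟫_ℂ).re = (⟪x, toEuclideanLin A x⟫_ℂ).re := by
  rw [re, map_smul, map_add, toEuclideanLin_conjTranspose_eq_adjoint]
  simp only [LinearMap.smul_apply, LinearMap.add_apply, inner_smul_right, inner_add_right,
    LinearMap.adjoint_inner_right]
  rw [← inner_conj_symm (toEuclideanLin A x) x, Complex.add_conj]
  simp

/-- Fan–Hoffman inequality. -/
theorem eig_re_le_singular (A : Matrix (Fin n) (Fin n) ℂ) (j : Fin n) :
    eigDesc (re_isHermitian A) j ≤ singular A j := by
  set hR := re_isHermitian A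
  set hP := isHermitian_conjTranspose_mul_self A
  set l := eigDesc hR j
  set s := singular A j
  have hs : 0 ≤ s := by
    obtain ⟨i, hi⟩ := nthLargest_mem_range (fun i => √(hP.eigenvalues i)) j
    exact (Real.sqrt_nonneg _).trans_eq hi
  set V := hR.eigenvectorSpan {i | l ≤ hR.eigenvalues i}
  set W := hP.eigenvectorSpan {i | √(hP.eigenvalues i) ≤ s}
  have hdim : finrank ℂ (EuclideanSpace ℂ (Fin n)) < finrank ℂ V + finrank ℂ W := by
    rw [finrank_euclideanSpace_fin, hR.finrank_eigenvectorSpan, hP.finrank_eigenvectorSpan]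
    have hV : j + 1 ≤ #{i | l ≤ hR.eigenvalues i} := succ_le_card_nthLargest_le _ j
    have hW : n - j ≤ #{i | √(hP.eigenvalues i) ≤ s} := sub_le_card_le_nthLargest _ j
    omega
  obtain ⟨x, hxV, hxW, hx0⟩ := Submodule.exists_ne_zero_mem_of_finrank_lt_add hdim
  have hlow : l * ‖x‖ ^ 2 ≤ (⟪x, toEuclideanLin A x⟫_ℂ).re := by
    rw [← re_inner_toEuclideanLin_re]
    exact hR.mul_norm_sq_le_re_inner_of_mem_eigenvectorSpan (fun i hi => (mem_filter.mp hi).2) hxV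
  have hup : ‖toEuclideanLin A x‖ ≤ s * ‖x‖ := by
    rw [← pow_le_pow_iff_left₀ (norm_nonneg _) (by positivity) two_ne_zero, mul_pow,
      ← A.re_inner_toEuclideanLin_conjTranspose_mul_self]
    exact hP.re_inner_le_mul_norm_sq_of_mem_eigenvectorSpan
      (fun i hi => (Real.sqrt_le_left hs).mp (mem_filter.mp hi).2) hxW
  exact le_of_mul_norm_sq_le_re_inner (𝕜 := ℂ) hx0 hlow hup

end Paper
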